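/- For every x ∈ [−1/2, 1/2], the function ψ satisfies 1 ≤ ψ(x) ≤ 2·ln 2; equivalently, 2x² ≤ D(1/2 + x ‖ 1/2) ≤ 4·ln(2)·x² for all x ∈ [−1/2, 1/2]. Moreover ψ is even, decreasing on [−1/2, 0], increasing on [0, 1/2], attains its minimum value ψ(0) = 1 and its maximum value ψ(1/2) = ψ(−1/2) = 2·ln 2. -/

import Mathlib

/-!
With `φ(t) = (1 + t) log (1 + t) + (1 - t) log (1 - t)` one has `D(1/2 + x ‖ 1/2) = φ(2x)/2`,
so `ψ(x) = φ(2x)/(2x)²` is even and everything reduces to `φ(t)/t²` being `≥ 1` and monotone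
on `(0, 1]`. Here `φ' = L := log (1 + t) - log (1 - t)`, and comparing the power series
`L(t) = ∑ 2t^(2k+1)/(2k+1)` with its first term and with `∑ 2t^(2k+1)` gives
`2t ≤ L(t) ≤ 2t/(1 - t²)` on `[0, 1)`. The lower bound integrates to `t² ≤ φ(t)`; the upper
bound is `(tL - 2φ)' ≥ 0`, hence `2φ ≤ tL`, which is the sign of `(φ/t²)' = (tL - 2φ)/t³`.
-/

open Real

/-- Kullback–Leibler divergence between `Bernoulli(p)` and `Bernoulli(q)`
(with the convention `0 · ln 0 = 0`, since `Real.log 0 = 0`, this agrees with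
the extension by continuity to `p ∈ {0,1}`). -/
noncomputable def bernKL (p q : ℝ) : ℝ :=
  p * Real.log (p / q) + (1 - p) * Real.log ((1 - p) / (1 - q))

/-- `ψ(x) = D(1/2 + x ‖ 1/2)/(2x²)` for `x ≠ 0`, and `ψ(0) = 1`. -/
noncomputable def psiFn (x : ℝ) : ℝ :=
  if x = 0 then 1 else bernKL (1 / 2 + x) (1 / 2) / (2 * x ^ 2)

open Set

lemma monotoneOn_Icc_of_hasDerivAt_nonneg {f f' : ℝ → ℝ} {a b : ℝ}
    (hf : ContinuousOn f (Icc a b)) (hf' : ∀ x ∈ Ioo a b, HasDerivAt f (f' x) x)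
    (hf'₀ : ∀ x ∈ Ioo a b, 0 ≤ f' x) : MonotoneOn f (Icc a b) :=
  monotoneOn_of_hasDerivWithinAt_nonneg (convex_Icc a b) hf
    (by simpa using fun x hx ↦ (hf' x hx).hasDerivWithinAt) (by simpa using hf'₀)

lemma two_mul_le_log_sub_log {t : ℝ} (h₀ : 0 ≤ t) (h₁ : t < 1) :
    2 * t ≤ log (1 + t) - log (1 - t) := by
  have hs := hasSum_log_sub_log_of_abs_lt_one (abs_lt.2 ⟨by linarith, h₁⟩)
  simpa using le_hasSum hs 0 fun k _ ↦ by positivity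

lemma log_sub_log_le {t : ℝ} (h₀ : 0 ≤ t) (h₁ : t < 1) :
    log (1 + t) - log (1 - t) ≤ 2 * t / (1 - t ^ 2) := by
  have hgeom := (hasSum_geometric_of_lt_one (sq_nonneg t) (by nlinarith)).mul_left (2 * t)
  refine hasSum_le (fun k ↦ ?_) (hasSum_log_sub_log_of_abs_lt_one (abs_lt.2 ⟨by linarith, h₁⟩))
    (by simpa [div_eq_mul_inv] using hgeom)
  rw [pow_succ, pow_mul]
  have hcoeff : 1 / (2 * (k : ℝ) + 1) ≤ 1 := by
    rw [div_le_one (by positivity)]; linarith [k.cast_nonneg (α := ℝ)]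
  have hterm : 0 ≤ (t ^ 2) ^ k * t := by positivity
  nlinarith

noncomputable def klPhi (t : ℝ) : ℝ := (1 + t) * log (1 + t) + (1 - t) * log (1 - t)

lemma bernKL_half_add (x : ℝ) : bernKL (1 / 2 + x) (1 / 2) = klPhi (2 * x) / 2 := by
  rw [bernKL, klPhi, show (1 / 2 + x) / (1 / 2 : ℝ) = 1 + 2 * x by ring,
    show (1 - (1 / 2 + x)) / (1 - 1 / 2 : ℝ) = 1 - 2 * x by ring]
  ring

lemma klPhi_neg (t : ℝ) : klPhi (-t) = klPhi t := by
  simp only [klPhi, ← sub_eq_add_neg, sub_neg_eq_add]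
  ring

@[simp]
lemma klPhi_zero : klPhi 0 = 0 := by
  simp [klPhi]

lemma klPhi_one : klPhi 1 = 2 * log 2 := by
  norm_num [klPhi]

lemma continuous_klPhi : Continuous klPhi :=
  (continuous_mul_log.comp (continuous_const_add 1)).add
    (continuous_mul_log.comp (continuous_sub_left 1))

lemma hasDerivAt_klPhi {t : ℝ} (h₁ : -1 < t) (h₂ : t < 1) :
    HasDerivAt klPhi (log (1 + t) - log (1 - t)) t := by
  have hp : 1 + t ≠ 0 := by linarith
  have hm : 1 - t ≠ 0 := by linarith
  have dp := ((hasDerivAt_id t).const_add 1).mul (((hasDerivAt_id t).const_add 1).log hp)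
  have dm := ((hasDerivAt_id t).const_sub 1).mul (((hasDerivAt_id t).const_sub 1).log hm)
  refine (dp.add dm).congr_deriv ?_
  simp only [id]
  field_simp
  ring

lemma hasDerivAt_log_one_add_sub_log_one_sub {t : ℝ} (h₁ : -1 < t) (h₂ : t < 1) :
    HasDerivAt (fun s ↦ log (1 + s) - log (1 - s)) (2 / (1 - t ^ 2)) t := by
  have hp : 1 + t ≠ 0 := by linarith
  have hm : 1 - t ≠ 0 := by linarith
  refine ((((hasDerivAt_id t).const_add 1).log hp).sub
    (((hasDerivAt_id t).const_sub 1).log hm)).congr_deriv ?_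
  have : 1 - t ^ 2 = (1 + t) * (1 - t) := by ring
  simp only [id, this]
  field_simp
  ring

lemma sq_le_klPhi {t : ℝ} (h₀ : 0 ≤ t) (h₁ : t ≤ 1) : t ^ 2 ≤ klPhi t := by
  have hmono : MonotoneOn (fun s ↦ klPhi s - s ^ 2) (Icc 0 1) :=
    monotoneOn_Icc_of_hasDerivAt_nonneg (continuous_klPhi.sub (continuous_pow 2)).continuousOn
      (fun s hs ↦ (hasDerivAt_klPhi (by linarith [hs.1]) hs.2).sub (hasDerivAt_pow 2 s))
      (fun s hs ↦ by simpa using two_mul_le_log_sub_log hs.1.le hs.2)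
  simpa using hmono (left_mem_Icc.2 zero_le_one) ⟨h₀, h₁⟩ h₀

lemma two_mul_klPhi_le {t : ℝ} (h₀ : 0 ≤ t) (h₁ : t < 1) :
    2 * klPhi t ≤ t * (log (1 + t) - log (1 - t)) := by
  have hderiv (s : ℝ) (hs : s ∈ Ioo (-1 : ℝ) 1) :
      HasDerivAt (fun s ↦ s * (log (1 + s) - log (1 - s)) - 2 * klPhi s)
        (2 * s / (1 - s ^ 2) - (log (1 + s) - log (1 - s))) s := by
    refine (((hasDerivAt_id s).mul (hasDerivAt_log_one_add_sub_log_one_sub hs.1 hs.2)).sub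
      ((hasDerivAt_klPhi hs.1 hs.2).const_mul 2)).congr_deriv ?_
    simp only [id]
    ring
  have hIcc (s : ℝ) (hs : s ∈ Icc 0 t) : s ∈ Ioo (-1 : ℝ) 1 :=
    ⟨by linarith [hs.1], by linarith [hs.2]⟩
  have hmono := monotoneOn_Icc_of_hasDerivAt_nonneg
    (fun s hs ↦ (hderiv s (hIcc s hs)).continuousAt.continuousWithinAt)
    (fun s hs ↦ hderiv s (hIcc s (Ioo_subset_Icc_self hs)))
    (fun s hs ↦ sub_nonneg.2 (log_sub_log_le hs.1.le (hs.2.trans h₁)))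
  simpa using hmono (left_mem_Icc.2 h₀) (right_mem_Icc.2 h₀) h₀

lemma monotoneOn_klPhi_div_sq : MonotoneOn (fun t ↦ klPhi t / t ^ 2) (Ioc 0 1) := by
  refine monotoneOn_of_hasDerivWithinAt_nonneg (convex_Ioc 0 1)
    (f' := fun t ↦ ((log (1 + t) - log (1 - t)) * t ^ 2 - klPhi t * (2 * t)) / (t ^ 2) ^ 2)
    (continuous_klPhi.continuousOn.div (continuous_pow 2).continuousOn
      fun t ht ↦ pow_ne_zero 2 ht.1.ne') (fun t ht ↦ ?_) (fun t ht ↦ ?_)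
  all_goals rw [interior_Ioc] at ht
  · exact ((hasDerivAt_klPhi (by linarith [ht.1]) ht.2).div (hasDerivAt_pow 2 t)
      (pow_ne_zero 2 ht.1.ne')).hasDerivWithinAt.congr_deriv (by norm_num)
  · have := two_mul_klPhi_le ht.1.le ht.2
    exact div_nonneg (by nlinarith [ht.1]) (by positivity)

lemma psiFn_eq_of_ne_zero {x : ℝ} (hx : x ≠ 0) : psiFn x = klPhi (2 * x) / (2 * x) ^ 2 := by
  rw [psiFn, if_neg hx, bernKL_half_add]
  ring

@[simp]
lemma psiFn_zero : psiFn 0 = 1 := if_pos rfl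

lemma psiFn_neg (x : ℝ) : psiFn (-x) = psiFn x := by
  rcases eq_or_ne x 0 with rfl | hx
  · simp
  · rw [psiFn_eq_of_ne_zero hx, psiFn_eq_of_ne_zero (neg_ne_zero.2 hx), mul_neg, klPhi_neg,
      neg_sq]

lemma psiFn_abs (x : ℝ) : psiFn |x| = psiFn x := by
  rcases abs_choice x with h | h <;> simp only [h, psiFn_neg]

lemma psiFn_half : psiFn (1 / 2) = 2 * log 2 := by
  rw [psiFn_eq_of_ne_zero (by norm_num)]
  norm_num [klPhi_one]

lemma bernKL_half_add_eq_mul_psiFn (x : ℝ) :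
    bernKL (1 / 2 + x) (1 / 2) = 2 * x ^ 2 * psiFn x := by
  rcases eq_or_ne x 0 with rfl | hx
  · simp [bernKL]
  · rw [psiFn, if_neg hx]
    field_simp

lemma one_le_psiFn {x : ℝ} (hx : |x| ≤ 1 / 2) : 1 ≤ psiFn x := by
  rw [← psiFn_abs]
  rcases (abs_nonneg x).eq_or_lt with h | h
  · simp [← h]
  · rw [psiFn_eq_of_ne_zero h.ne', le_div_iff₀ (by positivity), one_mul]
    exact sq_le_klPhi (by positivity) (by linarith)

lemma monotoneOn_psiFn : MonotoneOn psiFn (Icc 0 (1 / 2)) := by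
  intro a ha b hb hab
  rcases ha.1.eq_or_lt with rfl | ha₀
  · simpa using one_le_psiFn (abs_le.2 ⟨by linarith [hb.1], hb.2⟩)
  · rw [psiFn_eq_of_ne_zero ha₀.ne', psiFn_eq_of_ne_zero (ha₀.trans_le hab).ne']
    exact monotoneOn_klPhi_div_sq ⟨by linarith, by linarith [ha.2]⟩
      ⟨by linarith, by linarith [hb.2]⟩ (by linarith)

lemma antitoneOn_psiFn : AntitoneOn psiFn (Icc (-(1 : ℝ) / 2) 0) := by
  intro a ha b hb hab
  rw [← psiFn_neg a, ← psiFn_neg b]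
  exact monotoneOn_psiFn ⟨neg_nonneg.2 hb.2, by linarith [hb.1]⟩
    ⟨neg_nonneg.2 ha.2, by linarith [ha.1]⟩ (neg_le_neg hab)

lemma psiFn_le_two_mul_log_two {x : ℝ} (hx : |x| ≤ 1 / 2) : psiFn x ≤ 2 * log 2 := by
  rw [← psiFn_abs, ← psiFn_half]
  exact monotoneOn_psiFn ⟨abs_nonneg x, hx⟩ ⟨by norm_num, le_rfl⟩ hx

/-- Properties of `ψ`: on `[−1/2, 1/2]` it satisfies `1 ≤ ψ(x) ≤ 2 ln 2`
(equivalently `2x² ≤ D(1/2 + x ‖ 1/2) ≤ 4 ln(2) x²`), it is even, decreasing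
on `[−1/2, 0]`, increasing on `[0, 1/2]`, has minimum value `ψ(0) = 1` and
maximum value `ψ(1/2) = ψ(−1/2) = 2 ln 2`. -/
theorem psiFn_properties :
    (∀ x ∈ Set.Icc (-(1 : ℝ) / 2) (1 / 2), 1 ≤ psiFn x ∧ psiFn x ≤ 2 * Real.log 2) ∧
    (∀ x ∈ Set.Icc (-(1 : ℝ) / 2) (1 / 2),
      2 * x ^ 2 ≤ bernKL (1 / 2 + x) (1 / 2) ∧
        bernKL (1 / 2 + x) (1 / 2) ≤ 4 * Real.log 2 * x ^ 2) ∧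
    (∀ x ∈ Set.Icc (-(1 : ℝ) / 2) (1 / 2), psiFn (-x) = psiFn x) ∧
    AntitoneOn psiFn (Set.Icc (-(1 : ℝ) / 2) 0) ∧
    MonotoneOn psiFn (Set.Icc (0 : ℝ) (1 / 2)) ∧
    psiFn 0 = 1 ∧
    psiFn (1 / 2) = 2 * Real.log 2 ∧ psiFn (-(1 : ℝ) / 2) = 2 * Real.log 2 := by
  have hbounds (x : ℝ) (hx : x ∈ Icc (-(1 : ℝ) / 2) (1 / 2)) :
      1 ≤ psiFn x ∧ psiFn x ≤ 2 * log 2 := by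
    have habs : |x| ≤ 1 / 2 := abs_le.2 ⟨by linarith [hx.1], hx.2⟩
    exact ⟨one_le_psiFn habs, psiFn_le_two_mul_log_two habs⟩
  refine ⟨hbounds, fun x hx ↦ ?_, fun x _ ↦ psiFn_neg x, antitoneOn_psiFn, monotoneOn_psiFn,
    psiFn_zero, psiFn_half, by rw [neg_div, psiFn_neg, psiFn_half]⟩
  have hx₂ : 0 ≤ 2 * x ^ 2 := by positivity
  rw [bernKL_half_add_eq_mul_psiFn]
  constructor <;> nlinarith [hbounds x hx]
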